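/- Let G be a finite group, N ≤ G a subgroup of index 2, and I a finite G-set of even cardinality r with r′ orbits, such that N acts transitively on each G-orbit of I and every G-orbit of I has even cardinality. Let M be the G-lattice with ℤ-basis {e_i : i ∈ I} ∪ {f, g} and G-action given by: for σ ∈ N, σ·e_i = e_{σ·i}, σ·f = f, σ·g = g; for σ ∈ G∖N, σ·e_i = −e_{σ·i} + g, σ·f = f − Σ_{i∈I} e_i + (r/2)·g, σ·g = g. Let Z = {x ∈ M : Σ_{σ∈G} σ·x = 0} and let B be the ℤ-submodule of M generated by {σ·x − x : σ ∈ G, x ∈ M}. Then Z/B is isomorphic as an abelian group to (ℤ/2ℤ)^{r′−1}. -/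

import Mathlib

/-!
Since `N` is transitive on each orbit, every `i ∈ I` is fixed by some `τ ∉ N`; reindexing the
norm by `σ ↦ τσ` kills the `e`-part of the norm of `(v, 0, d)`, which is therefore
`|N| (∑ v + 2d) g`, so `Z = {(v, c, d) : c = 0, ∑ v + 2d = 0}`. On `Z` the subgroup `B` is cut out
by the parities of the orbit sums of `v`. These parities are `G`-invariant because orbits have even
size and `-1 = 1` mod 2. Conversely, modulo `B`, `e_i` only depends on the orbit of `i` and
`2 e_i = g` (as `τ e_i - e_i = g - 2 e_i`), so an element of `Z` with orbit sums `2 t_q` is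
`(∑ t_q + d) g = 0`. Hence `Z/B` is the space of parity vectors on the `r'` orbits with even total.
-/

open Finset MulAction Representation

theorem Representation.span_sub_eq_coinvariantsKer {k G V : Type*} [CommRing k] [Monoid G]
    [AddCommGroup V] [Module k V] (ρ : Representation k G V) :
    Submodule.span k {x | ∃ g : G, ∃ y, x = ρ g y - y} = Coinvariants.ker ρ := by
  rw [Coinvariants.ker]
  congr
  ext x
  simp [eq_comm]

theorem finrank_ker_sum_proj (K ι : Type*) [Field K] [Fintype ι] :
    Module.finrank K (LinearMap.ker (∑ i, LinearMap.proj i : (ι → K) →ₗ[K] K)) =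
      Fintype.card ι - 1 := by
  classical
  set S : (ι → K) →ₗ[K] K := ∑ i, LinearMap.proj i
  have hrank := S.finrank_range_add_finrank_ker
  rw [Module.finrank_fintype_fun_eq_card] at hrank
  rcases isEmpty_or_nonempty ι with hι | ⟨⟨i₀⟩⟩
  · simp only [Fintype.card_eq_zero] at hrank ⊢
    omega
  · have hsurj : LinearMap.range S = ⊤ :=
      LinearMap.range_eq_top.2 fun a => ⟨Pi.single i₀ a, by simp [S]⟩
    rw [hsurj, finrank_top, Module.finrank_self] at hrank
    omega

section IndexTwo

variable {G : Type*} [Group G] {I : Type*} [MulAction G I] {N : Subgroup G}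

theorem Subgroup.exists_notMem_smul_eq_self (hN : N ≠ ⊤)
    (htrans : ∀ i j : I, j ∈ orbit G i → ∃ σ ∈ N, σ • i = j) (i : I) :
    ∃ τ ∉ N, τ • i = i := by
  obtain ⟨τ, -, hτ⟩ := SetLike.exists_of_lt (lt_top_iff_ne_top.2 hN)
  obtain ⟨σ, hσ, hσi⟩ := htrans i (τ • i) (mem_orbit i τ)
  refine ⟨σ⁻¹ * τ, fun h => hτ ?_, by rw [mul_smul, ← hσi, inv_smul_smul]⟩
  simpa using N.mul_mem hσ h

theorem Subgroup.sum_ite_mem_inv_smul_eq_zero [Fintype G] [DecidablePred (· ∈ N)]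
    (hN : N.index = 2) (htrans : ∀ i j : I, j ∈ orbit G i → ∃ σ ∈ N, σ • i = j)
    (v : I → ℤ) (j : I) :
    ∑ σ : G, (if σ ∈ N then v (σ⁻¹ • j) else -v (σ⁻¹ • j)) = 0 := by
  obtain ⟨τ, hτN, hτj⟩ := N.exists_notMem_smul_eq_self (fun h => by simp [h] at hN) htrans j
  set f : G → ℤ := fun σ => if σ ∈ N then v (σ⁻¹ • j) else -v (σ⁻¹ • j)
  have hflip : ∀ σ, f (τ * σ) = -f σ := by
    intro σ
    simp only [f, mul_inv_rev, mul_smul, inv_smul_eq_iff.2 hτj.symm]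
    by_cases hσ : σ ∈ N <;> simp [Subgroup.mul_mem_iff_of_index_two hN, hσ, hτN]
  have hneg : ∑ σ, f σ = -∑ σ, f σ := by
    rw [← Finset.sum_neg_distrib, ← Equiv.sum_comp (Equiv.mulLeft τ)]
    exact Finset.sum_congr rfl fun σ _ => hflip σ
  linarith

end IndexTwo

section OrbitParity

variable (G : Type*) [Group G] {I : Type*} [MulAction G I] [Fintype I]
  [DecidableEq (orbitRel.Quotient G I)]

def orbitParity : (I → ℤ) →ₗ[ℤ] (orbitRel.Quotient G I → ZMod 2) where
  toFun v q := ∑ i with Quotient.mk'' i = q, (v i : ZMod 2)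
  map_add' v w := by ext q; simp [Finset.sum_add_distrib]
  map_smul' a v := by ext q; simp [Finset.mul_sum]

variable {G}

theorem orbitParity_apply (v : I → ℤ) (q : orbitRel.Quotient G I) :
    orbitParity G v q = ∑ i with Quotient.mk'' i = q, (v i : ZMod 2) := rfl

theorem sum_orbitParity [Fintype (orbitRel.Quotient G I)] (v : I → ℤ) :
    ∑ q, orbitParity G v q = ((∑ i, v i : ℤ) : ZMod 2) := by
  simp [orbitParity_apply, Finset.sum_fiberwise]

theorem orbitParity_single [DecidableEq I] (i : I) (n : ℤ) :
    orbitParity G (Pi.single i n) = Pi.single (Quotient.mk'' i) (n : ZMod 2) := by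
  ext q
  simp [orbitParity_apply, Pi.single_apply, eq_comm]

theorem orbitParity_comp_smul (σ : G) (v : I → ℤ) :
    orbitParity G (fun j => v (σ • j)) = orbitParity G v := by
  ext q
  simp only [orbitParity_apply, Finset.sum_filter]
  exact Fintype.sum_equiv (MulAction.toPerm σ) _ _ fun a => by
    simp [orbitRel.Quotient.quotient_smul_eq]

theorem orbitParity_const (horb : ∀ i : I, Even (Nat.card (orbit G i))) (c : ℤ) :
    orbitParity G (fun _ : I => c) = 0 := by
  ext q
  induction q using Quotient.inductionOn' with
  | h a =>
    have hcard : #{i | (Quotient.mk'' i : orbitRel.Quotient G I) = Quotient.mk'' a} =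
        Nat.card (orbit G a) := by
      rw [← Nat.card_eq_finsetCard]
      exact Nat.card_congr <| Equiv.subtypeEquivRight fun i => by
        simp [Quotient.eq'', orbitRel_apply]
    rw [orbitParity_apply, Finset.sum_const, hcard, nsmul_eq_mul, (horb a).natCast_zmod_two,
      zero_mul, Pi.zero_apply]

theorem orbitParity_surjective : Function.Surjective (orbitParity G (I := I)) := by
  classical
  intro w
  refine ⟨∑ q, Pi.single q.out ((w q).val : ℤ), ?_⟩
  simp only [map_sum, orbitParity_single, Quotient.out_eq', Int.cast_natCast,
    ZMod.natCast_zmod_val, Finset.univ_sum_single]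

end OrbitParity

section TwistedPermAction

variable {G : Type*} [Group G] {I : Type*} [MulAction G I] [Fintype I]

structure IsTwistedPermAction (N : Subgroup G) (k : ℤ)
    (ρ : Representation ℤ G ((I → ℤ) × ℤ × ℤ)) : Prop where
  apply_of_mem : ∀ σ ∈ N, ∀ (v : I → ℤ) (c d : ℤ),
    ρ σ (v, c, d) = (fun j => v (σ⁻¹ • j), c, d)
  apply_of_notMem : ∀ σ ∉ N, ∀ (v : I → ℤ) (c d : ℤ),
    ρ σ (v, c, d) = (fun j => -v (σ⁻¹ • j) - c, c, (∑ i, v i) + c * k + d)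

namespace IsTwistedPermAction

variable {N : Subgroup G} {k : ℤ} {ρ : Representation ℤ G ((I → ℤ) × ℤ × ℤ)}

theorem apply_fst [DecidablePred (· ∈ N)] (hρ : IsTwistedPermAction N k ρ) (σ : G)
    (x : (I → ℤ) × ℤ × ℤ) (j : I) :
    (ρ σ x).1 j = if σ ∈ N then x.1 (σ⁻¹ • j) else -x.1 (σ⁻¹ • j) - x.2.1 := by
  by_cases hσ : σ ∈ N
  · simp [hσ, hρ.apply_of_mem σ hσ x.1]
  · simp [hσ, hρ.apply_of_notMem σ hσ x.1]

theorem apply_snd_fst (hρ : IsTwistedPermAction N k ρ) (σ : G) (x : (I → ℤ) × ℤ × ℤ) :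
    (ρ σ x).2.1 = x.2.1 := by
  by_cases hσ : σ ∈ N
  · simp [hρ.apply_of_mem σ hσ x.1]
  · simp [hρ.apply_of_notMem σ hσ x.1]

theorem apply_snd_snd [DecidablePred (· ∈ N)] (hρ : IsTwistedPermAction N k ρ) (σ : G)
    (v : I → ℤ) (d : ℤ) :
    (ρ σ (v, 0, d)).2.2 = if σ ∈ N then d else (∑ i, v i) + d := by
  by_cases hσ : σ ∈ N
  · simp [hσ, hρ.apply_of_mem σ hσ]
  · simp [hσ, hρ.apply_of_notMem σ hσ]

theorem orbitParity_apply_fst [DecidableEq (orbitRel.Quotient G I)]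
    (hρ : IsTwistedPermAction N k ρ) (horb : ∀ i : I, Even (Nat.card (orbit G i)))
    (σ : G) (x : (I → ℤ) × ℤ × ℤ) :
    orbitParity G (ρ σ x).1 = orbitParity G x.1 := by
  obtain ⟨v, c, d⟩ := x
  by_cases hσ : σ ∈ N
  · rw [hρ.apply_of_mem σ hσ]
    exact orbitParity_comp_smul σ⁻¹ v
  · rw [hρ.apply_of_notMem σ hσ]
    have hsplit : (fun j => -v (σ⁻¹ • j) - c) = -(fun j => v (σ⁻¹ • j)) - fun _ => c := rfl
    rw [hsplit, map_sub, map_neg, orbitParity_comp_smul, orbitParity_const horb, sub_zero]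
    ext q
    exact ZMod.neg_eq_self_mod_two _

theorem coinvariantsKer_le_ker_orbitParity [DecidableEq (orbitRel.Quotient G I)]
    (hρ : IsTwistedPermAction N k ρ) (horb : ∀ i : I, Even (Nat.card (orbit G i))) :
    Coinvariants.ker ρ ≤
      LinearMap.ker ((orbitParity G).comp (LinearMap.fst ℤ (I → ℤ) (ℤ × ℤ))) := by
  refine Submodule.span_le.2 ?_
  rintro _ ⟨⟨σ, y⟩, rfl⟩
  simp [hρ.orbitParity_apply_fst horb]

theorem mk_single_eq_of_mem_orbit [DecidableEq I] (hρ : IsTwistedPermAction N k ρ)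
    (htrans : ∀ i j : I, j ∈ orbit G i → ∃ σ ∈ N, σ • i = j) {i j : I}
    (hj : j ∈ orbit G i) :
    Coinvariants.mk ρ (Pi.single j 1, 0, 0) = Coinvariants.mk ρ (Pi.single i 1, 0, 0) := by
  obtain ⟨σ, hσ, rfl⟩ := htrans i j hj
  have h : ρ σ (Pi.single i 1, 0, 0) = (Pi.single (σ • i) 1, 0, 0) := by
    rw [hρ.apply_of_mem σ hσ]
    congr 1
    ext j
    simp [Pi.single_apply, inv_smul_eq_iff]
  rw [← h, Coinvariants.mk_self_apply]

theorem two_smul_mk_single [DecidableEq I] (hρ : IsTwistedPermAction N k ρ) (hN : N ≠ ⊤)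
    (htrans : ∀ i j : I, j ∈ orbit G i → ∃ σ ∈ N, σ • i = j) (i : I) :
    (2 : ℤ) • Coinvariants.mk ρ (Pi.single i 1, 0, 0) = Coinvariants.mk ρ (0, 0, 1) := by
  obtain ⟨τ, hτN, hτi⟩ := N.exists_notMem_smul_eq_self hN htrans i
  have h : ρ τ (Pi.single i 1, 0, 0) = (0, 0, 1) - (Pi.single i 1, 0, 0) := by
    rw [hρ.apply_of_notMem τ hτN]
    refine Prod.ext ?_ (by simp)
    ext j
    simp [Pi.single_apply, inv_smul_eq_iff, hτi]
  have hfix := Coinvariants.mk_self_apply ρ τ (Pi.single i 1, 0, 0)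
  rw [h, map_sub] at hfix
  rw [two_smul]
  exact (sub_eq_iff_eq_add.1 hfix).symm

theorem mem_coinvariantsKer_of_orbitParity_eq_zero [DecidableEq (orbitRel.Quotient G I)]
    (hρ : IsTwistedPermAction N k ρ) (hN : N ≠ ⊤)
    (htrans : ∀ i j : I, j ∈ orbit G i → ∃ σ ∈ N, σ • i = j) (v : I → ℤ) (d : ℤ)
    (hsum : ∑ i, v i + 2 * d = 0) (hpar : orbitParity G v = 0) :
    ((v, 0, d) : (I → ℤ) × ℤ × ℤ) ∈ Coinvariants.ker ρ := by
  classical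
  let E (i : I) := Coinvariants.mk ρ (Pi.single i 1, 0, 0)
  let g := Coinvariants.mk ρ (0, 0, 1)
  have heven (q : orbitRel.Quotient G I) :
      ∃ t : ℤ, ∑ i with Quotient.mk'' i = q, v i = 2 * t := by
    have hq := congrFun hpar q
    rw [orbitParity_apply, ← Int.cast_sum, Pi.zero_apply, ZMod.intCast_eq_zero_iff_even] at hq
    obtain ⟨t, ht⟩ := hq
    exact ⟨t, by omega⟩
  choose t ht using heven
  have hsum_t : ∑ q, t q + d = 0 := by
    have : 2 * ∑ q, t q = ∑ i, v i := by
      rw [Finset.mul_sum,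
        ← Finset.sum_fiberwise univ (fun i : I => (Quotient.mk'' i : orbitRel.Quotient G I))]
      exact Finset.sum_congr rfl fun q _ => (ht q).symm
    omega
  have hE (q : orbitRel.Quotient G I) (i : I) (hi : Quotient.mk'' i = q) : E i = E q.out := by
    subst hi
    exact (hρ.mk_single_eq_of_mem_orbit htrans (Quotient.mk_out' (s₁ := orbitRel G I) i)).symm
  have hdecomp : ((v, 0, d) : (I → ℤ) × ℤ × ℤ) =
      ∑ i, v i • (Pi.single i 1, 0, 0) + d • (0, 0, 1) := by
    ext <;> simp [Prod.fst_sum, Prod.snd_sum, Pi.single_apply]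
  rw [← Coinvariants.mk_eq_zero]
  calc Coinvariants.mk ρ (v, 0, d)
      = ∑ i, v i • E i + d • g := by simp only [hdecomp, map_add, map_sum, map_zsmul, E, g]
    _ = ∑ q, (∑ i with Quotient.mk'' i = q, v i) • E q.out + d • g := by
      rw [← Finset.sum_fiberwise univ (fun i : I => (Quotient.mk'' i : orbitRel.Quotient G I))]
      congr 1
      refine Finset.sum_congr rfl fun q _ => ?_
      rw [Finset.sum_smul]
      exact Finset.sum_congr rfl fun i hi => by rw [hE q i (Finset.mem_filter.1 hi).2]
    _ = (∑ q, t q + d) • g := by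
      have h2E (i : I) : (2 : ℤ) • E i = g := hρ.two_smul_mk_single hN htrans i
      simp_rw [ht, mul_comm (2 : ℤ), mul_smul, h2E]
      rw [add_smul, Finset.sum_smul]
    _ = 0 := by rw [hsum_t, zero_smul]

variable [Fintype G]

theorem norm_apply_snd_fst (hρ : IsTwistedPermAction N k ρ) (x : (I → ℤ) × ℤ × ℤ) :
    (ρ.norm x).2.1 = Fintype.card G * x.2.1 := by
  simp [Representation.norm, Prod.snd_sum, Prod.fst_sum, hρ.apply_snd_fst]

theorem norm_apply_of_snd_fst_eq_zero (hρ : IsTwistedPermAction N k ρ) (hN : N.index = 2)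
    (htrans : ∀ i j : I, j ∈ orbit G i → ∃ σ ∈ N, σ • i = j) (v : I → ℤ) (d : ℤ) :
    ρ.norm (v, 0, d) = (0, 0, Nat.card N * ((∑ i, v i) + 2 * d)) := by
  classical
  have hcard : Fintype.card G = 2 * Nat.card N := by
    rw [← Nat.card_eq_fintype_card, ← N.card_mul_index, hN, mul_comm]
  have hmem : #{σ | σ ∈ N} = Nat.card N := by
    simp [Nat.card_eq_fintype_card, Fintype.card_subtype]
  have hcompl : #{σ | σ ∉ N} = Nat.card N := by
    have := Finset.card_filter_add_card_filter_not (s := univ) (· ∈ N)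
    rw [card_univ, hcard] at this
    omega
  refine Prod.ext ?_ (Prod.ext ?_ ?_)
  · ext j
    simpa [Representation.norm, Prod.fst_sum, hρ.apply_fst] using
      N.sum_ite_mem_inv_smul_eq_zero hN htrans v j
  · simp [Representation.norm, Prod.snd_sum, Prod.fst_sum, hρ.apply_snd_fst]
  · simp only [Representation.norm, LinearMap.coe_sum, Finset.sum_apply, Prod.snd_sum,
      hρ.apply_snd_snd, sum_ite, sum_const, Int.nsmul_eq_mul, hmem, hcompl]
    ring

theorem mem_ker_norm_iff (hρ : IsTwistedPermAction N k ρ) (hN : N.index = 2)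
    (htrans : ∀ i j : I, j ∈ orbit G i → ∃ σ ∈ N, σ • i = j) (x : (I → ℤ) × ℤ × ℤ) :
    x ∈ LinearMap.ker ρ.norm ↔ x.2.1 = 0 ∧ ∑ i, x.1 i + 2 * x.2.2 = 0 := by
  obtain ⟨v, c, d⟩ := x
  rw [LinearMap.mem_ker]
  constructor
  · intro hx
    obtain rfl : c = 0 := by
      simpa [hx, Fintype.card_ne_zero] using (hρ.norm_apply_snd_fst (v, c, d)).symm
    simpa [hx, Nat.card_pos.ne'] using
      congrArg (·.2.2) (hρ.norm_apply_of_snd_fst_eq_zero hN htrans v d)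
  · rintro ⟨rfl, h⟩
    simp [hρ.norm_apply_of_snd_fst_eq_zero hN htrans, h]

theorem mem_coinvariantsKer_iff [DecidableEq (orbitRel.Quotient G I)]
    (hρ : IsTwistedPermAction N k ρ) (hN : N.index = 2)
    (htrans : ∀ i j : I, j ∈ orbit G i → ∃ σ ∈ N, σ • i = j)
    (horb : ∀ i : I, Even (Nat.card (orbit G i))) {x : (I → ℤ) × ℤ × ℤ}
    (hx : x ∈ LinearMap.ker ρ.norm) :
    x ∈ Coinvariants.ker ρ ↔ orbitParity G x.1 = 0 := by
  refine ⟨fun h => hρ.coinvariantsKer_le_ker_orbitParity horb h, fun h => ?_⟩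
  obtain ⟨v, c, d⟩ := x
  obtain ⟨rfl, hsum⟩ := (hρ.mem_ker_norm_iff hN htrans _).1 hx
  exact hρ.mem_coinvariantsKer_of_orbitParity_eq_zero (fun h => by simp [h] at hN) htrans v d
    hsum h

theorem exists_mem_ker_norm_orbitParity_eq_iff
    [Fintype (orbitRel.Quotient G I)] [DecidableEq (orbitRel.Quotient G I)]
    (hρ : IsTwistedPermAction N k ρ) (hN : N.index = 2)
    (htrans : ∀ i j : I, j ∈ orbit G i → ∃ σ ∈ N, σ • i = j)
    (w : orbitRel.Quotient G I → ZMod 2) :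
    (∃ x ∈ LinearMap.ker ρ.norm, orbitParity G x.1 = w) ↔ ∑ q, w q = 0 := by
  constructor
  · rintro ⟨x, hx, rfl⟩
    obtain ⟨-, hsum⟩ := (hρ.mem_ker_norm_iff hN htrans x).1 hx
    rw [sum_orbitParity]
    exact Even.intCast_zmod_two ⟨-x.2.2, by omega⟩
  · intro hw
    obtain ⟨v, rfl⟩ := orbitParity_surjective w
    rw [sum_orbitParity, ZMod.intCast_eq_zero_iff_even] at hw
    obtain ⟨m, hm⟩ := hw
    exact ⟨(v, 0, -m), (hρ.mem_ker_norm_iff hN htrans _).2 ⟨rfl, by dsimp only; omega⟩, rfl⟩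

end IsTwistedPermAction

end TwistedPermAction

theorem tate_neg_one_even_case_all_orbits_even_general
    (G : Type) [Group G] [Fintype G] (N : Subgroup G) (hN : N.index = 2)
    (I : Type) [Fintype I] [MulAction G I]
    (r r' : ℕ)
    (hr' : Nat.card (MulAction.orbitRel.Quotient G I) = r')
    (htrans : ∀ i j : I, j ∈ MulAction.orbit G i → ∃ σ ∈ N, σ • i = j)
    (horb : ∀ i : I, Even (Nat.card (MulAction.orbit G i)))
    (ρ : Representation ℤ G ((I → ℤ) × ℤ × ℤ))
    (hρN : ∀ σ ∈ N, ∀ (v : I → ℤ) (c d : ℤ),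
      ρ σ (v, c, d) = (fun j => v (σ⁻¹ • j), c, d))
    (hρ : ∀ σ ∉ N, ∀ (v : I → ℤ) (c d : ℤ),
      ρ σ (v, c, d) =
        (fun j => -v (σ⁻¹ • j) - c, c, (∑ i : I, v i) + c * ((r : ℤ) / 2) + d)) :
    Nonempty
      ((LinearMap.ker (∑ σ : G, ρ σ) ⧸
        (Submodule.span ℤ
          {x : (I → ℤ) × ℤ × ℤ | ∃ σ : G, ∃ y, x = ρ σ y - y}).comap
          (LinearMap.ker (∑ σ : G, ρ σ)).subtype) ≃+
      (Fin (r' - 1) → ZMod 2)) := by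
  classical
  have hρ' : IsTwistedPermAction N ((r : ℤ) / 2) ρ := ⟨hρN, hρ⟩
  let Z := LinearMap.ker ρ.norm
  let Φ := ((orbitParity G).comp (LinearMap.fst ℤ (I → ℤ) (ℤ × ℤ))).domRestrict Z
  let S : (orbitRel.Quotient G I → ZMod 2) →ₗ[ZMod 2] ZMod 2 := ∑ q, LinearMap.proj q
  have hker : (Coinvariants.ker ρ).comap Z.subtype = LinearMap.ker Φ := by
    ext x
    exact hρ'.mem_coinvariantsKer_iff hN htrans horb x.2
  have hrange : LinearMap.range Φ = (LinearMap.ker S).restrictScalars ℤ := by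
    ext w
    simpa [Φ, S, Z] using hρ'.exists_mem_ker_norm_orbitParity_eq_iff hN htrans w
  have hdim : Module.finrank (ZMod 2) (LinearMap.ker S) =
      Module.finrank (ZMod 2) (Fin (r' - 1) → ZMod 2) := by
    rw [finrank_ker_sum_proj, Module.finrank_fin_fun, ← Nat.card_eq_fintype_card, hr']
  rw [Representation.span_sub_eq_coinvariantsKer]
  exact ⟨(Submodule.quotEquivOfEq _ _ hker ≪≫ₗ Φ.quotKerEquivRange ≪≫ₗ
      LinearEquiv.ofEq _ _ hrange).toAddEquiv.trans
    (Submodule.restrictScalarsEquiv ℤ (ZMod 2) _ _ ≪≫ₗ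
      LinearEquiv.ofFinrankEq _ _ hdim).toAddEquiv⟩

/-- Tate cohomology `Ĥ⁻¹` of the lattice `M = ⟨e_i (i ∈ I), f, g⟩` with
`σ·e_i = e_{σi}`, `σ·f = f`, `σ·g = g` for `σ ∈ N`, and `σ·e_i = −e_{σi} + g`,
`σ·f = f − ∑ e_i + (r/2)g`, `σ·g = g` for `σ ∉ N`, where `|I| = r` is even,
`N` (of index 2) acts transitively on each `G`-orbit, and every orbit has even
cardinality: `Z/B ≅ (ℤ/2ℤ)^{r′−1}` with `r′` the number of orbits.
Here `M` is realised as `(I → ℤ) × ℤ × ℤ`, with `e_i` the indicator of `i`,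
`f = (0, 1, 0)` and `g = (0, 0, 1)`. -/
theorem tate_neg_one_even_case_all_orbits_even
    (G : Type) [Group G] [Fintype G] (N : Subgroup G) (hN : N.index = 2)
    (I : Type) [Fintype I] [MulAction G I]
    (r r' : ℕ) (hr : Fintype.card I = r) (heven : Even r)
    (hr' : Nat.card (MulAction.orbitRel.Quotient G I) = r')
    (htrans : ∀ i j : I, j ∈ MulAction.orbit G i → ∃ σ ∈ N, σ • i = j)
    (horb : ∀ i : I, Even (Nat.card (MulAction.orbit G i)))
    (ρ : Representation ℤ G ((I → ℤ) × ℤ × ℤ))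
    (hρN : ∀ σ ∈ N, ∀ (v : I → ℤ) (c d : ℤ),
      ρ σ (v, c, d) = (fun j => v (σ⁻¹ • j), c, d))
    (hρ : ∀ σ ∉ N, ∀ (v : I → ℤ) (c d : ℤ),
      ρ σ (v, c, d) =
        (fun j => -v (σ⁻¹ • j) - c, c, (∑ i : I, v i) + c * ((r : ℤ) / 2) + d)) :
    Nonempty
      ((LinearMap.ker (∑ σ : G, ρ σ) ⧸
        (Submodule.span ℤ
          {x : (I → ℤ) × ℤ × ℤ | ∃ σ : G, ∃ y, x = ρ σ y - y}).comap
          (LinearMap.ker (∑ σ : G, ρ σ)).subtype) ≃+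
      (Fin (r' - 1) → ZMod 2)) :=
  tate_neg_one_even_case_all_orbits_even_general G N hN I r r' hr' htrans horb ρ hρN hρ
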